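/- arXiv:1502.05089 — 2 statements merged into one kernel-verified Lean document; each statement's English description precedes it below -/
import Mathlib

section
/- Let G be a finite-dimensional Lie group and let L be a central extension of LG by U(1) equipped with a multiplicative fusion product λ, and let can : PG → L be the unique section along ♭ with λ(can_γ, can_γ) = can_γ. Then the map U(1) × PG → L, (z, γ) ↦ z·can_γ, is an injective group homomorphism with image p⁻¹(♭(PG)); in particular, the restriction of L to the flat loops is trivializable as a central extension of PG by U(1). -/
open scoped Manifold
open Function Set

noncomputable section

variable {E : Type*} [NormedAddCommGroup E] [NormedSpace ℝ E] [FiniteDimensional ℝ E]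
variable {H : Type*} [TopologicalSpace H]

section Target
variable {E' : Type*} [NormedAddCommGroup E'] [NormedSpace ℝ E']
variable {H' : Type*} [TopologicalSpace H']
variable {M : Type*} [TopologicalSpace M] [ChartedSpace H' M]

/-- A smooth map `h : ℝ × ℝ → M`, 1-periodic in the second variable (modelling a map
`[0,1] × S¹ → M`), is a *thin homotopy* if its differential has rank at most `1` at every
point of `[0,1] × S¹`. -/
def IsThinHomotopy (I' : ModelWithCorners ℝ E' H') (h : ℝ × ℝ → M) : Prop :=
  ContMDiff 𝓘(ℝ, ℝ × ℝ) I' (⊤ : ℕ∞) h ∧ (∀ t z, h (t, z + 1) = h (t, z)) ∧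
  ∀ p : ℝ × ℝ, p.1 ∈ Set.Icc (0:ℝ) 1 →
    LinearMap.rank (mfderiv 𝓘(ℝ, ℝ × ℝ) I' h p).toLinearMap ≤ 1

/-- Two (smooth 1-periodic) loops `τ₀ τ₁ : ℝ → M` are *thin homotopic* if there is a thin
homotopy connecting them. -/
def ThinHomotopic (I' : ModelWithCorners ℝ E' H') (τ₀ τ₁ : ℝ → M) : Prop :=
  ∃ h : ℝ × ℝ → M, IsThinHomotopy I' h ∧ (∀ z, h (0, z) = τ₀ z) ∧ (∀ z, h (1, z) = τ₁ z)

end Target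

variable {G : Type*} [TopologicalSpace G] [ChartedSpace H G] [Group G]

/-- A smooth loop in `G`, modelled as a smooth 1-periodic map `ℝ → G`. -/
def IsSmoothLoop (I : ModelWithCorners ℝ E H) (f : ℝ → G) : Prop :=
  ContMDiff 𝓘(ℝ, ℝ) I (⊤ : ℕ∞) f ∧ Function.Periodic f 1

/-- A smooth path in `G` with sitting instants, modelled as a smooth map `ℝ → G` which is
constant near `(-∞, 0]` and near `[1, ∞)`. -/
def IsSmoothPath (I : ModelWithCorners ℝ E H) (γ : ℝ → G) : Prop :=
  ContMDiff 𝓘(ℝ, ℝ) I (⊤ : ℕ∞) γ ∧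
  ∃ ε > 0, (∀ s ≤ ε, γ s = γ 0) ∧ (∀ s, 1 - ε ≤ s → γ s = γ 1)

/-- Two paths share their initial point and their end point. -/
def SameEnds (γ₁ γ₂ : ℝ → G) : Prop := γ₁ 0 = γ₂ 0 ∧ γ₁ 1 = γ₂ 1

/-- `(γ₁, γ₂, γ₃) ∈ PG^{[3]}`. -/
def IsTriple (I : ModelWithCorners ℝ E H) (γ₁ γ₂ γ₃ : ℝ → G) : Prop :=
  IsSmoothPath I γ₁ ∧ IsSmoothPath I γ₂ ∧ IsSmoothPath I γ₃ ∧
    SameEnds γ₁ γ₂ ∧ SameEnds γ₂ γ₃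

/-- The loop `γ₁ ∪ γ₂` associated to a pair of paths with the same end points:
`(γ₁∪γ₂)(e^{2πit}) = γ₁(2t)` for `t ∈ [0,1/2]` and `= γ₂(2-2t)` for `t ∈ [1/2,1]`,
written as a 1-periodic function on `ℝ`. -/
def chordFn (γ₁ γ₂ : ℝ → G) : ℝ → G := fun t =>
  if Int.fract t ≤ 1 / 2 then γ₁ (2 * Int.fract t) else γ₂ (2 - 2 * Int.fract t)

/-- The reversed path. -/
def revP (γ : ℝ → G) : ℝ → G := fun s => γ (1 - s)

/-- The loop group `LG` of smooth 1-periodic maps `ℝ → G`. -/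
abbrev LoopGrp (I : ModelWithCorners ℝ E H) (G : Type*) [TopologicalSpace G]
    [ChartedSpace H G] : Type _ :=
  {f : ℝ → G // IsSmoothLoop I f}

variable (I : ModelWithCorners ℝ E H) [LieGroup I (⊤ : ℕ∞) G]

instance : Group (LoopGrp I G) where
  mul f g := ⟨f.1 * g.1, f.2.1.mul g.2.1, f.2.2.mul g.2.2⟩
  one := ⟨fun _ => 1, contMDiff_const, fun _ => rfl⟩
  inv f := ⟨fun t => (f.1 t)⁻¹, f.2.1.inv, fun x => congrArg Inv.inv (f.2.2 x)⟩
  mul_assoc a b c := Subtype.ext (mul_assoc a.1 b.1 c.1)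
  one_mul a := Subtype.ext (one_mul a.1)
  mul_one a := Subtype.ext (mul_one a.1)
  inv_mul_cancel a := Subtype.ext (inv_mul_cancel a.1)

variable {L : Type*} [Group L]

/-- A central extension `1 → U(1) → L → LG → 1` of the loop group `LG` by `U(1)`. -/
structure CentralExt (I : ModelWithCorners ℝ E H) (G : Type*) [TopologicalSpace G]
    [ChartedSpace H G] [Group G] [LieGroup I (⊤ : ℕ∞) G] (L : Type*) [Group L] where
  proj : L →* LoopGrp I G
  emb : Circle →* L
  proj_surjective : Function.Surjective proj
  emb_injective : Function.Injective emb
  mem_ker_iff : ∀ q : L, proj q = 1 ↔ q ∈ Set.range emb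
  central : ∀ (z : Circle) (q : L), emb z * q = q * emb z

variable {I}

/-- `q ∈ L` lies in the fibre over the loop with underlying function `f`. -/
def CentralExt.Over (ce : CentralExt I G L) (q : L) (f : ℝ → G) : Prop :=
  (ce.proj q).1 = f

/-- A fusion product on a central extension of `LG`. -/
structure FusionProduct (ce : CentralExt I G L) where
  fus : (ℝ → G) → (ℝ → G) → (ℝ → G) → L → L → L
  isOver : ∀ γ₁ γ₂ γ₃ q₁₂ q₂₃, IsTriple I γ₁ γ₂ γ₃ →
    ce.Over q₁₂ (chordFn γ₁ γ₂) → ce.Over q₂₃ (chordFn γ₂ γ₃) →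
    ce.Over (fus γ₁ γ₂ γ₃ q₁₂ q₂₃) (chordFn γ₁ γ₃)
  act_left : ∀ γ₁ γ₂ γ₃ (z : Circle) q₁₂ q₂₃, IsTriple I γ₁ γ₂ γ₃ →
    ce.Over q₁₂ (chordFn γ₁ γ₂) → ce.Over q₂₃ (chordFn γ₂ γ₃) →
    fus γ₁ γ₂ γ₃ (ce.emb z * q₁₂) q₂₃ = ce.emb z * fus γ₁ γ₂ γ₃ q₁₂ q₂₃
  act_right : ∀ γ₁ γ₂ γ₃ (z : Circle) q₁₂ q₂₃, IsTriple I γ₁ γ₂ γ₃ →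
    ce.Over q₁₂ (chordFn γ₁ γ₂) → ce.Over q₂₃ (chordFn γ₂ γ₃) →
    fus γ₁ γ₂ γ₃ q₁₂ (ce.emb z * q₂₃) = ce.emb z * fus γ₁ γ₂ γ₃ q₁₂ q₂₃
  assoc : ∀ γ₁ γ₂ γ₃ γ₄ q₁₂ q₂₃ q₃₄,
    IsSmoothPath I γ₁ → IsSmoothPath I γ₂ → IsSmoothPath I γ₃ → IsSmoothPath I γ₄ →
    SameEnds γ₁ γ₂ → SameEnds γ₂ γ₃ → SameEnds γ₃ γ₄ →
    ce.Over q₁₂ (chordFn γ₁ γ₂) → ce.Over q₂₃ (chordFn γ₂ γ₃) → ce.Over q₃₄ (chordFn γ₃ γ₄) →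
    fus γ₁ γ₃ γ₄ (fus γ₁ γ₂ γ₃ q₁₂ q₂₃) q₃₄ = fus γ₁ γ₂ γ₄ q₁₂ (fus γ₂ γ₃ γ₄ q₂₃ q₃₄)

/-- A fusion product is multiplicative if it is a "homomorphism" for the group structures. -/
def FusionProduct.Multiplicative {ce : CentralExt I G L} (lam : FusionProduct ce) : Prop :=
  ∀ γ₁ γ₂ γ₃ γ₁' γ₂' γ₃' q₁₂ q₂₃ q₁₂' q₂₃',
    IsTriple I γ₁ γ₂ γ₃ → IsTriple I γ₁' γ₂' γ₃' →
    ce.Over q₁₂ (chordFn γ₁ γ₂) → ce.Over q₂₃ (chordFn γ₂ γ₃) →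
    ce.Over q₁₂' (chordFn γ₁' γ₂') → ce.Over q₂₃' (chordFn γ₂' γ₃') →
    lam.fus γ₁ γ₂ γ₃ q₁₂ q₂₃ * lam.fus γ₁' γ₂' γ₃' q₁₂' q₂₃' =
      lam.fus (γ₁ * γ₁') (γ₂ * γ₂') (γ₃ * γ₃') (q₁₂ * q₁₂') (q₂₃ * q₂₃')

/-- A thin homotopy equivariant structure on a central extension of `LG`. -/
structure ThinStructure (ce : CentralExt I G L) where
  d : (ℝ → G) → (ℝ → G) → L → L
  isOver : ∀ τ₀ τ₁ q, ThinHomotopic I τ₀ τ₁ → ce.Over q τ₀ → ce.Over (d τ₀ τ₁ q) τ₁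
  equivariant : ∀ τ₀ τ₁ (z : Circle) q, ThinHomotopic I τ₀ τ₁ → ce.Over q τ₀ →
    d τ₀ τ₁ (ce.emb z * q) = ce.emb z * d τ₀ τ₁ q
  bijOn : ∀ τ₀ τ₁, ThinHomotopic I τ₀ τ₁ →
    Set.BijOn (d τ₀ τ₁) {q | ce.Over q τ₀} {q | ce.Over q τ₁}
  cocycle : ∀ τ₀ τ₁ τ₂ q, ThinHomotopic I τ₀ τ₁ → ThinHomotopic I τ₁ τ₂ →
    ThinHomotopic I τ₀ τ₂ → ce.Over q τ₀ →
    d τ₁ τ₂ (d τ₀ τ₁ q) = d τ₀ τ₂ q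

/-- A thin homotopy equivariant structure is multiplicative if it is compatible with the group
structures, for pairs of loops joined by a thin path in `L(G × G)`. -/
def ThinStructure.Multiplicative {ce : CentralExt I G L} (ds : ThinStructure ce) : Prop :=
  ∀ τ₀ γ₀ τ₁ γ₁ q q',
    ThinHomotopic (I.prod I) (fun z => (τ₀ z, γ₀ z)) (fun z => (τ₁ z, γ₁ z)) →
    ce.Over q τ₀ → ce.Over q' γ₀ →
    ds.d (τ₀ * γ₀) (τ₁ * γ₁) (q * q') = ds.d τ₀ τ₁ q * ds.d γ₀ γ₁ q'

/-- Compatibility of a thin homotopy equivariant structure with a fusion product. -/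
def FusCompatible {ce : CentralExt I G L} (lam : FusionProduct ce) (ds : ThinStructure ce) :
    Prop :=
  ∀ (Γ₁ Γ₂ Γ₃ : ℝ → ℝ → G) q₁₂ q₂₃,
    (∀ t, IsTriple I (Γ₁ t) (Γ₂ t) (Γ₃ t)) →
    IsThinHomotopy I (fun p => chordFn (Γ₁ p.1) (Γ₂ p.1) p.2) →
    IsThinHomotopy I (fun p => chordFn (Γ₂ p.1) (Γ₃ p.1) p.2) →
    IsThinHomotopy I (fun p => chordFn (Γ₁ p.1) (Γ₃ p.1) p.2) →
    ce.Over q₁₂ (chordFn (Γ₁ 0) (Γ₂ 0)) → ce.Over q₂₃ (chordFn (Γ₂ 0) (Γ₃ 0)) →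
    ds.d (chordFn (Γ₁ 0) (Γ₃ 0)) (chordFn (Γ₁ 1) (Γ₃ 1)) (lam.fus (Γ₁ 0) (Γ₂ 0) (Γ₃ 0) q₁₂ q₂₃) =
      lam.fus (Γ₁ 1) (Γ₂ 1) (Γ₃ 1)
        (ds.d (chordFn (Γ₁ 0) (Γ₂ 0)) (chordFn (Γ₁ 1) (Γ₂ 1)) q₁₂)
        (ds.d (chordFn (Γ₂ 0) (Γ₃ 0)) (chordFn (Γ₂ 1) (Γ₃ 1)) q₂₃)

/-- A thin homotopy equivariant structure symmetrizes a fusion product. -/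
def FusSymmetrizes {ce : CentralExt I G L} (lam : FusionProduct ce) (ds : ThinStructure ce) :
    Prop :=
  ∀ γ₁ γ₂ γ₃ q₁₂ q₂₃, IsTriple I γ₁ γ₂ γ₃ →
    ce.Over q₁₂ (chordFn γ₁ γ₂) → ce.Over q₂₃ (chordFn γ₂ γ₃) →
    ds.d (chordFn γ₁ γ₃) (chordFn (revP γ₃) (revP γ₁)) (lam.fus γ₁ γ₂ γ₃ q₁₂ q₂₃) =
      lam.fus (revP γ₃) (revP γ₂) (revP γ₁)
        (ds.d (chordFn γ₂ γ₃) (chordFn (revP γ₃) (revP γ₂)) q₂₃)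
        (ds.d (chordFn γ₁ γ₂) (chordFn (revP γ₂) (revP γ₁)) q₁₂)

/-- Fusive = compatible and symmetrizing. -/
def FusFusive {ce : CentralExt I G L} (lam : FusionProduct ce) (ds : ThinStructure ce) : Prop :=
  FusCompatible lam ds ∧ FusSymmetrizes lam ds

/-- A smoothing map. -/
def IsSmoothingMap (φ : ℝ → ℝ) : Prop :=
  ContDiff ℝ (⊤ : ℕ∞) φ ∧ φ 0 = 0 ∧ φ 1 = 1 ∧
  (∃ ε > 0, (∀ s ≤ ε, φ s = 0) ∧ (∀ s, 1 - ε ≤ s → φ s = 1)) ∧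
  Set.MapsTo φ (Set.Icc 0 1) (Set.Icc 0 1)

end

section MyHelpers

variable {E : Type*} [NormedAddCommGroup E] [NormedSpace ℝ E] [FiniteDimensional ℝ E]
variable {H : Type*} [TopologicalSpace H] {G : Type*} [TopologicalSpace G] [ChartedSpace H G]
variable [Group G] {I : ModelWithCorners ℝ E H} [LieGroup I (⊤ : ℕ∞) G] {L : Type*} [Group L]

theorem myLoopMulVal (a b : LoopGrp I G) : (a * b).1 = a.1 * b.1 := rfl

theorem myProjEmb (ce : CentralExt I G L) (z : Circle) : ce.proj (ce.emb z) = 1 :=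
  (ce.mem_ker_iff _).mpr ⟨z, rfl⟩

theorem myOverEmbMul (ce : CentralExt I G L) (z : Circle) {q : L} {f : ℝ → G}
    (h : ce.Over q f) : ce.Over (ce.emb z * q) f := by
  unfold CentralExt.Over at *
  rw [map_mul, myProjEmb, one_mul]
  exact h

theorem myTripleSelf {γ : ℝ → G} (h : IsSmoothPath I γ) : IsTriple I γ γ γ :=
  ⟨h, h, h, ⟨rfl, rfl⟩, ⟨rfl, rfl⟩⟩

theorem myFibre (ce : CentralExt I G L) {q q' : L} {f : ℝ → G}
    (h : ce.Over q f) (h' : ce.Over q' f) : ∃ z, q = ce.emb z * q' := by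
  have hp : ce.proj q = ce.proj q' := Subtype.ext (h.trans h'.symm)
  have hk : ce.proj (q * q'⁻¹) = 1 := by rw [map_mul, map_inv, hp, mul_inv_cancel]
  obtain ⟨z, hz⟩ := (ce.mem_ker_iff _).mp hk
  exact ⟨z, by rw [hz, inv_mul_cancel_right]⟩

theorem myIdemUnique (ce : CentralExt I G L) (lam : FusionProduct ce)
    (can : (ℝ → G) → L)
    (hsec : ∀ γ, IsSmoothPath I γ → ce.Over (can γ) (chordFn γ γ))
    (hidem : ∀ γ, IsSmoothPath I γ → lam.fus γ γ γ (can γ) (can γ) = can γ)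
    {γ : ℝ → G} (hγ : IsSmoothPath I γ) {q : L}
    (hq : ce.Over q (chordFn γ γ)) (hqi : lam.fus γ γ γ q q = q) :
    q = can γ := by
  obtain ⟨z, hz⟩ := myFibre ce hq (hsec γ hγ)
  have htr := myTripleSelf hγ
  have hover := myOverEmbMul ce z (hsec γ hγ)
  have hcomp : lam.fus γ γ γ q q = ce.emb z * (ce.emb z * can γ) := by
    rw [hz, lam.act_left γ γ γ z _ _ htr (hsec γ hγ) hover,
        lam.act_right γ γ γ z _ _ htr (hsec γ hγ) (hsec γ hγ), hidem γ hγ]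
  rw [hqi, hz] at hcomp
  have hcan : can γ = ce.emb z * can γ := mul_left_cancel hcomp
  have h1 : (1 : L) * can γ = ce.emb z * can γ := by rw [one_mul]; exact hcan
  have hz1 : z = 1 := ce.emb_injective (by rw [map_one]; exact (mul_right_cancel h1).symm)
  rw [hz, hz1, map_one, one_mul]

theorem myChordEq (γ : ℝ → G) {s : ℝ} (h0 : 0 ≤ s) (h1 : s ≤ 1) :
    chordFn γ γ (s / 2) = γ s := by
  have hf : Int.fract (s / 2) = s / 2 := Int.fract_eq_self.mpr ⟨by linarith, by linarith⟩
  simp only [chordFn, hf]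
  rw [if_pos (by linarith)]
  congr 1
  ring

theorem myPathInj {γ₁ γ₂ : ℝ → G} (h₁ : IsSmoothPath I γ₁) (h₂ : IsSmoothPath I γ₂)
    (h : chordFn γ₁ γ₁ = chordFn γ₂ γ₂) : γ₁ = γ₂ := by
  have key : ∀ s, 0 ≤ s → s ≤ 1 → γ₁ s = γ₂ s := fun s hs0 hs1 => by
    have := congrFun h (s / 2)
    rwa [myChordEq γ₁ hs0 hs1, myChordEq γ₂ hs0 hs1] at this
  obtain ⟨ε₁, hε₁, ha₁, hb₁⟩ := h₁.2
  obtain ⟨ε₂, hε₂, ha₂, hb₂⟩ := h₂.2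
  funext s
  rcases le_or_gt s 0 with hs | hs
  · rw [ha₁ s (hs.trans hε₁.le), ha₂ s (hs.trans hε₂.le), key 0 le_rfl zero_le_one]
  · rcases le_or_gt s 1 with hs1 | hs1
    · exact key s hs.le hs1
    · rw [hb₁ s (by linarith), hb₂ s (by linarith), key 1 zero_le_one le_rfl]

theorem mySmoothPathMul {γ₁ γ₂ : ℝ → G} (h₁ : IsSmoothPath I γ₁) (h₂ : IsSmoothPath I γ₂) :
    IsSmoothPath I (γ₁ * γ₂) := by
  obtain ⟨ε₁, hε₁, ha₁, hb₁⟩ := h₁.2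
  obtain ⟨ε₂, hε₂, ha₂, hb₂⟩ := h₂.2
  refine ⟨h₁.1.mul h₂.1, min ε₁ ε₂, lt_min hε₁ hε₂, fun s hs => ?_, fun s hs => ?_⟩
  · simp only [Pi.mul_apply, ha₁ s (hs.trans (min_le_left _ _)),
      ha₂ s (hs.trans (min_le_right _ _))]
  · have m1 : 1 - ε₁ ≤ s := by have := min_le_left ε₁ ε₂; linarith
    have m2 : 1 - ε₂ ≤ s := by have := min_le_right ε₁ ε₂; linarith
    simp only [Pi.mul_apply, hb₁ s m1, hb₂ s m2]

theorem myChordMul (γ₁ γ₂ : ℝ → G) :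
    chordFn (γ₁ * γ₂) (γ₁ * γ₂) = chordFn γ₁ γ₁ * chordFn γ₂ γ₂ := by
  funext t
  simp only [chordFn, Pi.mul_apply]
  split_ifs <;> rfl

theorem myCanMul (ce : CentralExt I G L) (lam : FusionProduct ce)
    (hmul : lam.Multiplicative) (can : (ℝ → G) → L)
    (hsec : ∀ γ, IsSmoothPath I γ → ce.Over (can γ) (chordFn γ γ))
    (hidem : ∀ γ, IsSmoothPath I γ → lam.fus γ γ γ (can γ) (can γ) = can γ)
    {γ₁ γ₂ : ℝ → G} (h₁ : IsSmoothPath I γ₁) (h₂ : IsSmoothPath I γ₂) :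
    can (γ₁ * γ₂) = can γ₁ * can γ₂ := by
  have h12 := mySmoothPathMul h₁ h₂
  have hover : ce.Over (can γ₁ * can γ₂) (chordFn (γ₁ * γ₂) (γ₁ * γ₂)) := by
    unfold CentralExt.Over
    rw [map_mul, myChordMul, myLoopMulVal, hsec γ₁ h₁, hsec γ₂ h₂]
  have hqi : lam.fus (γ₁ * γ₂) (γ₁ * γ₂) (γ₁ * γ₂) (can γ₁ * can γ₂) (can γ₁ * can γ₂) =
      can γ₁ * can γ₂ := by
    rw [← hmul γ₁ γ₁ γ₁ γ₂ γ₂ γ₂ (can γ₁) (can γ₁) (can γ₂) (can γ₂)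
        (myTripleSelf h₁) (myTripleSelf h₂) (hsec γ₁ h₁) (hsec γ₁ h₁) (hsec γ₂ h₂) (hsec γ₂ h₂),
      hidem γ₁ h₁, hidem γ₂ h₂]
  exact (myIdemUnique ce lam can hsec hidem h12 hover hqi).symm

end MyHelpers

/-- The map `U(1) × PG → L, (z,γ) ↦ z·can_γ` is an injective group
homomorphism with image `p⁻¹(♭(PG))`; in particular the restriction of `L` to the flat
loops is trivializable as a central extension of `PG` by `U(1)`. -/
theorem statement6
    {E : Type*} [NormedAddCommGroup E] [NormedSpace ℝ E] [FiniteDimensional ℝ E]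
    {H : Type*} [TopologicalSpace H] {G : Type*} [TopologicalSpace G] [ChartedSpace H G]
    [Group G] {I : ModelWithCorners ℝ E H} [LieGroup I (⊤ : ℕ∞) G] {L : Type*} [Group L]
    (ce : CentralExt I G L) (lam : FusionProduct ce) (hmul : lam.Multiplicative)
    (can : (ℝ → G) → L)
    (hsec : ∀ γ, IsSmoothPath I γ → ce.Over (can γ) (chordFn γ γ))
    (hidem : ∀ γ, IsSmoothPath I γ → lam.fus γ γ γ (can γ) (can γ) = can γ)
    (huniq : ∀ can' : (ℝ → G) → L,
      (∀ γ, IsSmoothPath I γ → ce.Over (can' γ) (chordFn γ γ)) →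
      (∀ γ, IsSmoothPath I γ → lam.fus γ γ γ (can' γ) (can' γ) = can' γ) →
      ∀ γ, IsSmoothPath I γ → can' γ = can γ) :
    -- group homomorphism:
    (∀ (z₁ z₂ : Circle) (γ₁ γ₂ : ℝ → G), IsSmoothPath I γ₁ → IsSmoothPath I γ₂ →
      (ce.emb z₁ * can γ₁) * (ce.emb z₂ * can γ₂) = ce.emb (z₁ * z₂) * can (γ₁ * γ₂)) ∧
    -- injectivity:
    (∀ (z₁ z₂ : Circle) (γ₁ γ₂ : ℝ → G), IsSmoothPath I γ₁ → IsSmoothPath I γ₂ →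
      ce.emb z₁ * can γ₁ = ce.emb z₂ * can γ₂ → z₁ = z₂ ∧ γ₁ = γ₂) ∧
    -- the image is exactly `p⁻¹(♭(PG))`:
    ({q : L | ∃ γ : ℝ → G, IsSmoothPath I γ ∧ ce.Over q (chordFn γ γ)} =
      {q : L | ∃ (z : Circle) (γ : ℝ → G), IsSmoothPath I γ ∧ q = ce.emb z * can γ}) := by
  refine ⟨fun z₁ z₂ γ₁ γ₂ h₁ h₂ => ?_, fun z₁ z₂ γ₁ γ₂ h₁ h₂ hEq => ?_, ?_⟩
  · rw [myCanMul ce lam hmul can hsec hidem h₁ h₂, map_mul]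
    simp only [mul_assoc]
    rw [← mul_assoc (can γ₁) (ce.emb z₂), ← ce.central z₂ (can γ₁), mul_assoc]
  · have hp : ce.proj (ce.emb z₁ * can γ₁) = ce.proj (ce.emb z₂ * can γ₂) := by rw [hEq]
    rw [map_mul, map_mul, myProjEmb, myProjEmb, one_mul, one_mul] at hp
    have hch : chordFn γ₁ γ₁ = chordFn γ₂ γ₂ := by
      rw [← hsec γ₁ h₁, ← hsec γ₂ h₂, hp]
    have hγ : γ₁ = γ₂ := myPathInj h₁ h₂ hch
    subst hγ
    have hz : ce.emb z₁ = ce.emb z₂ := mul_right_cancel hEq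
    exact ⟨ce.emb_injective hz, rfl⟩
  · ext q
    simp only [Set.mem_setOf_eq]
    constructor
    · rintro ⟨γ, hγ, hq⟩
      obtain ⟨z, hz⟩ := myFibre ce hq (hsec γ hγ)
      exact ⟨z, γ, hγ, hz⟩
    · rintro ⟨z, γ, hγ, rfl⟩
      exact ⟨γ, hγ, myOverEmbMul ce z (hsec γ hγ)⟩
end

section
/- Let G be a finite-dimensional Lie group and let L be a central extension of LG by U(1) equipped with a multiplicative fusion product λ and a multiplicative thin homotopy equivariant structure d that is fusive with respect to λ. Then L is disjoint-commutative: if τ₁, τ₂ ∈ LG are supported on disjoint intervals, i.e. there exist disjoint closed arcs I, J ⊊ S¹ with τ₁(z) = 1 for all z ∉ I and τ₂(z) = 1 for all z ∉ J, then p₁·p₂ = p₂·p₁ for all p₁ ∈ L_{τ₁} and p₂ ∈ L_{τ₂}. -/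
open scoped Manifold
open Function Set

/-- A loop `τ : ℝ → G` (1-periodic) is supported on the closed arc determined by the
interval `[a, b]` if it equals `1` outside of `[a, b] + ℤ`. -/
def SupportedOnArc {G : Type*} [Group G] (τ : ℝ → G) (a b : ℝ) : Prop :=
  ∀ z : ℝ, (∀ n : ℤ, z + n ∉ Set.Icc a b) → τ z = 1


lemma per_int {β : Type*} {f : ℝ → β} (h : Function.Periodic f 1) (y : ℝ) (n : ℤ) :
    f (y + n) = f y := by
  simpa using (h.int_mul n) y

lemma thin_reparam
    {E' : Type*} [NormedAddCommGroup E'] [NormedSpace ℝ E']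
    {H' : Type*} [TopologicalSpace H']
    {M : Type*} [TopologicalSpace M] [ChartedSpace H' M]
    (I' : ModelWithCorners ℝ E' H') (f : ℝ → M)
    (hf : ContMDiff 𝓘(ℝ, ℝ) I' (⊤ : ℕ∞) f) (hper : Function.Periodic f 1)
    (ψ : ℝ → ℝ) (hψ : ContDiff ℝ (⊤ : ℕ∞) ψ) (hψper : ∀ x, ψ (x + 1) = ψ x + 1) :
    ThinHomotopic I' f (fun z => f (ψ z)) := by
  set u : ℝ × ℝ → ℝ := fun p => (1 - p.1) * p.2 + p.1 * ψ p.2 with hu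
  have hucd : ContDiff ℝ (⊤ : ℕ∞) u := by
    apply ContDiff.add
    · exact (contDiff_const.sub contDiff_fst).mul contDiff_snd
    · exact contDiff_fst.mul (hψ.comp contDiff_snd)
  have hucm : ContMDiff 𝓘(ℝ, ℝ × ℝ) 𝓘(ℝ, ℝ) (⊤ : ℕ∞) u := hucd.contMDiff
  refine ⟨f ∘ u, ⟨hf.comp hucm, ?_, ?_⟩, ?_, ?_⟩
  · intro t z
    have : u (t, z + 1) = u (t, z) + 1 := by
      simp only [hu, hψper z]; ring
    simp only [Function.comp_apply, this, hper (u (t, z))]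
  · intro p hp
    have hd := mfderiv_comp p (hf.mdifferentiableAt (by simp) (x := u p))
      (hucm.mdifferentiableAt (by simp))
    rw [hd, ContinuousLinearMap.toLinearMap_comp]
    have h1 := LinearMap.lift_rank_comp_le_right
      (mfderiv 𝓘(ℝ, ℝ × ℝ) 𝓘(ℝ, ℝ) u p).toLinearMap
      (mfderiv 𝓘(ℝ, ℝ) I' f (u p)).toLinearMap
    have hB : LinearMap.rank (mfderiv 𝓘(ℝ, ℝ × ℝ) 𝓘(ℝ, ℝ) u p).toLinearMap ≤ 1 :=
      le_trans (LinearMap.rank_le_range _) (le_of_eq (Module.rank_self ℝ))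
    have h2 := le_trans h1 (Cardinal.lift_le.mpr hB)
    rwa [Cardinal.lift_uzero, Cardinal.lift_one] at h2
  · intro z; simp [hu]
  · intro z; simp [hu]

noncomputable def stepFn (x : ℝ) : ℝ := Real.smoothTransition (8 * x - 1)

lemma stepFn_contDiff : ContDiff ℝ (⊤ : ℕ∞) stepFn :=
  Real.smoothTransition.contDiff.comp (by fun_prop)

lemma stepFn_zero {x : ℝ} (h : x ≤ 1/8) : stepFn x = 0 :=
  Real.smoothTransition.zero_of_nonpos (by linarith)

lemma stepFn_one {x : ℝ} (h : 1/4 ≤ x) : stepFn x = 1 :=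
  Real.smoothTransition.one_of_one_le (by linarith)

lemma stepFn_nonneg (x : ℝ) : 0 ≤ stepFn x := Real.smoothTransition.nonneg _

lemma stepFn_le_one (x : ℝ) : stepFn x ≤ 1 := Real.smoothTransition.le_one _

noncomputable def bumpG (α β u : ℝ) : ℝ := α * stepFn u + β * stepFn (u - 1/2)

lemma bumpG_contDiff (α β : ℝ) : ContDiff ℝ (⊤ : ℕ∞) (bumpG α β) := by
  unfold bumpG
  exact (contDiff_const.mul stepFn_contDiff).add
    (contDiff_const.mul (stepFn_contDiff.comp (by fun_prop)))

lemma bumpG_zero {α β u : ℝ} (h : u ≤ 1/8) : bumpG α β u = 0 := by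
  unfold bumpG
  rw [stepFn_zero h, stepFn_zero (by linarith : u - 1/2 ≤ 1/8)]; ring

lemma bumpG_one {α β u : ℝ} (hαβ : α + β = 1) (h : 3/4 ≤ u) : bumpG α β u = 1 := by
  unfold bumpG
  rw [stepFn_one (by linarith : (1:ℝ)/4 ≤ u), stepFn_one (by linarith : (1:ℝ)/4 ≤ u - 1/2)]
  linarith

lemma bumpG_low {α β u : ℝ} (hα : 0 ≤ α) (hβ : 0 ≤ β) (h : u ≤ 5/8) :
    bumpG α β u ∈ Set.Icc 0 α := by
  unfold bumpG
  rw [stepFn_zero (by linarith : u - 1/2 ≤ 1/8)]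
  have h1 := stepFn_le_one u
  have h2 := stepFn_nonneg u
  constructor
  · nlinarith
  · nlinarith

lemma bumpG_high {α β u : ℝ} (hβ : 0 ≤ β) (h : 1/4 ≤ u) :
    bumpG α β u ∈ Set.Icc α (α + β) := by
  unfold bumpG
  rw [stepFn_one h]
  have h1 := stepFn_le_one (u - 1/2)
  have h2 := stepFn_nonneg (u - 1/2)
  constructor <;> nlinarith

lemma bumpG_half (α β : ℝ) : bumpG α β (1/2) = α := by
  unfold bumpG
  rw [stepFn_one (by norm_num), stepFn_zero (by norm_num)]; ring

noncomputable def psiFn (m₂ α β x : ℝ) : ℝ := m₂ - 1 + ⌊x⌋ + bumpG α β (Int.fract x)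

lemma psiFn_add_one (m₂ α β x : ℝ) : psiFn m₂ α β (x + 1) = psiFn m₂ α β x + 1 := by
  unfold psiFn
  rw [Int.floor_add_one, Int.fract_add_one]
  push_cast; ring

lemma psiFn_fract (m₂ α β x : ℝ) :
    psiFn m₂ α β x = (m₂ - 1 + bumpG α β (Int.fract x)) + (⌊x⌋ : ℝ) := by
  unfold psiFn; ring

lemma psiFn_contDiff (m₂ α β : ℝ) (hαβ : α + β = 1) : ContDiff ℝ (⊤ : ℕ∞) (psiFn m₂ α β) := by
  rw [contDiff_iff_contDiffAt]
  intro x₀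
  set n : ℤ := ⌊x₀ + 1/8⌋ with hn
  have hn1 : (n : ℝ) ≤ x₀ + 1/8 := Int.floor_le _
  have hn2 : x₀ + 1/8 < n + 1 := Int.lt_floor_add_one _
  have hmem : x₀ ∈ Set.Ioo ((n : ℝ) - 1/4) ((n : ℝ) + 1) := ⟨by linarith, by linarith⟩
  have hmodel : ContDiffAt ℝ (⊤ : ℕ∞) (fun x => m₂ - 1 + (n : ℝ) + bumpG α β (x - n)) x₀ :=
    ((contDiff_const.add ((bumpG_contDiff α β).comp (by fun_prop))).contDiffAt)
  refine hmodel.congr_of_eventuallyEq ?_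
  filter_upwards [Ioo_mem_nhds hmem.1 hmem.2] with x hx
  rcases le_or_gt (n : ℝ) x with hge | hlt
  · have hfl : ⌊x⌋ = n := Int.floor_eq_iff.mpr ⟨hge, by exact_mod_cast hx.2⟩
    have hfr : Int.fract x = x - n := by rw [← Int.self_sub_floor, hfl]
    rw [psiFn_fract, hfr, hfl]; ring
  · have hfl : ⌊x⌋ = n - 1 := by
      rw [Int.floor_eq_iff]
      constructor
      · push_cast; linarith [hx.1]
      · push_cast; linarith
    have hfr : Int.fract x = x - n + 1 := by
      rw [← Int.self_sub_floor, hfl]; push_cast; ring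
    rw [psiFn_fract, hfr, hfl]
    rw [bumpG_one hαβ (by linarith [hx.1] : 3/4 ≤ x - (n:ℝ) + 1),
        bumpG_zero (by linarith : x - (n:ℝ) ≤ 1/8)]
    push_cast; ring

/-- **disjoint-commutativity.** In a central extension of `LG` with a
multiplicative fusion product and a multiplicative, fusive thin homotopy equivariant
structure, elements over loops supported on disjoint (proper, closed) arcs of `S¹` commute. -/
theorem statement9
    {E : Type*} [NormedAddCommGroup E] [NormedSpace ℝ E] [FiniteDimensional ℝ E]
    {H : Type*} [TopologicalSpace H] {G : Type*} [TopologicalSpace G] [ChartedSpace H G]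
    [Group G] {I : ModelWithCorners ℝ E H} [LieGroup I (⊤ : ℕ∞) G] {L : Type*} [Group L]
    (ce : CentralExt I G L) (lam : FusionProduct ce) (ds : ThinStructure ce)
    (hlmul : lam.Multiplicative) (hdmul : ds.Multiplicative) (hfus : FusFusive lam ds)
    (τ₁ τ₂ : ℝ → G) (h₁ : IsSmoothLoop I τ₁) (h₂ : IsSmoothLoop I τ₂)
    -- the two loops are supported on disjoint closed arcs `I, J ⊊ S¹`:
    (a₁ b₁ a₂ b₂ : ℝ) (hab₁ : a₁ ≤ b₁) (h₁₂ : b₁ < a₂) (hab₂ : a₂ ≤ b₂) (h₂₁ : b₂ < a₁ + 1)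
    (hs₁ : SupportedOnArc τ₁ a₁ b₁) (hs₂ : SupportedOnArc τ₂ a₂ b₂)
    (p₁ p₂ : L) (hp₁ : ce.Over p₁ τ₁) (hp₂ : ce.Over p₂ τ₂) :
    p₁ * p₂ = p₂ * p₁ := by
  -- midpoints of the two complementary gaps
  set m₁ : ℝ := (b₁ + a₂) / 2 with hm₁def
  set m₂ : ℝ := (b₂ + a₁ + 1) / 2 with hm₂def
  have hb₁m₁ : b₁ < m₁ := by rw [hm₁def]; linarith
  have hm₁a₂ : m₁ < a₂ := by rw [hm₁def]; linarith
  have hb₂m₂ : b₂ < m₂ := by rw [hm₂def]; linarith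
  have hm₂a₁ : m₂ < a₁ + 1 := by rw [hm₂def]; linarith
  set α : ℝ := m₁ - m₂ + 1 with hαdef
  set β : ℝ := m₂ - m₁ with hβdef
  have hα : 0 ≤ α := by rw [hαdef]; linarith
  have hβ : 0 ≤ β := by rw [hβdef]; linarith
  have hαβ : α + β = 1 := by rw [hαdef, hβdef]; ring
  -- avoidance lemmas
  have hA1 : ∀ y : ℝ, m₁ ≤ y → y ≤ m₂ → τ₁ y = 1 := by
    intro y hy1 hy2
    refine hs₁ y fun n hn => ?_
    obtain ⟨hn1, hn2⟩ := hn
    rcases le_or_gt 0 n with h | h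
    · have hc : (0 : ℝ) ≤ (n : ℝ) := by exact_mod_cast h
      linarith
    · have hc : (n : ℝ) ≤ -1 := by exact_mod_cast (by omega : n ≤ -1)
      linarith
  have hA1' : τ₁ (m₂ - 1) = 1 := by
    refine hs₁ _ fun n hn => ?_
    obtain ⟨hn1, hn2⟩ := hn
    rcases le_or_gt 1 n with h | h
    · have hc : (1 : ℝ) ≤ (n : ℝ) := by exact_mod_cast h
      linarith
    · have hc : (n : ℝ) ≤ 0 := by exact_mod_cast (by omega : n ≤ 0)
      linarith
  have hA2 : ∀ y : ℝ, m₂ - 1 ≤ y → y ≤ m₁ → τ₂ y = 1 := by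
    intro y hy1 hy2
    refine hs₂ y fun n hn => ?_
    obtain ⟨hn1, hn2⟩ := hn
    rcases le_or_gt 1 n with h | h
    · have hc : (1 : ℝ) ≤ (n : ℝ) := by exact_mod_cast h
      linarith
    · have hc : (n : ℝ) ≤ 0 := by exact_mod_cast (by omega : n ≤ 0)
      linarith
  have hA2' : τ₂ m₂ = 1 := by
    refine hs₂ _ fun n hn => ?_
    obtain ⟨hn1, hn2⟩ := hn
    rcases le_or_gt 0 n with h | h
    · have hc : (0 : ℝ) ≤ (n : ℝ) := by exact_mod_cast h
      linarith
    · have hc : (n : ℝ) ≤ -1 := by exact_mod_cast (by omega : n ≤ -1)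
      linarith
  -- pointwise disjointness
  have hdisj : ∀ y : ℝ, τ₁ y = 1 ∨ τ₂ y = 1 := by
    intro y
    by_cases hca : ∀ n : ℤ, y + n ∉ Set.Icc a₁ b₁
    · exact Or.inl (hs₁ y hca)
    · push_neg at hca
      obtain ⟨n, hn1, hn2⟩ := hca
      refine Or.inr (hs₂ y fun m hm => ?_)
      obtain ⟨hm1, hm2⟩ := hm
      have h1 : (0 : ℝ) < (m : ℝ) - (n : ℝ) := by linarith
      have h2 : (m : ℝ) - (n : ℝ) < 1 := by linarith
      have h1' : 0 < m - n := by exact_mod_cast h1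
      have h2' : m - n < 1 := by exact_mod_cast h2
      omega
  have hτcomm : τ₁ * τ₂ = τ₂ * τ₁ := by
    funext z
    rcases hdisj z with h | h <;> simp [Pi.mul_apply, h]
  -- the reparametrisation
  set ψ : ℝ → ℝ := psiFn m₂ α β with hψdef
  have hψcd : ContDiff ℝ (⊤ : ℕ∞) ψ := psiFn_contDiff m₂ α β hαβ
  have hψper : ∀ x, ψ (x + 1) = ψ x + 1 := psiFn_add_one m₂ α β
  have hψeval : ∀ (f : ℝ → G), Function.Periodic f 1 →
      ∀ x, f (ψ x) = f (m₂ - 1 + bumpG α β (Int.fract x)) := by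
    intro f hf x
    rw [hψdef, psiFn_fract]
    exact per_int hf _ _
  -- range facts
  have hval_low : ∀ u : ℝ, u ≤ 5/8 → τ₂ (m₂ - 1 + bumpG α β u) = 1 := by
    intro u hu
    obtain ⟨hL, hU⟩ := bumpG_low (α := α) (β := β) hα hβ hu
    exact hA2 _ (by linarith) (by rw [hαdef] at hU ⊢; linarith)
  have hval_high : ∀ u : ℝ, 1/4 ≤ u → τ₁ (m₂ - 1 + bumpG α β u) = 1 := by
    intro u hu
    obtain ⟨hL, hU⟩ := bumpG_high (α := α) (β := β) hβ hu
    refine hA1 _ (by rw [hαdef] at hL ⊢; linarith) (by rw [hαβ] at hU; linarith)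
  -- the three paths
  set c : ℝ → G := fun _ => 1 with hcdef
  set γ₁ : ℝ → G := fun s => τ₁ (m₂ - 1 + bumpG α β (s / 2)) with hγ₁def
  set γ₂ : ℝ → G := fun s => τ₂ (m₂ - 1 + bumpG α β (1 - s / 2)) with hγ₂def
  -- chord identities
  have hch₁ : (fun z => τ₁ (ψ z)) = chordFn γ₁ c := by
    funext t
    show τ₁ (ψ t) = chordFn γ₁ c t
    rw [hψeval τ₁ h₁.2 t]
    unfold chordFn
    have hf0 : 0 ≤ Int.fract t := Int.fract_nonneg t
    split_ifs with h
    · rw [hγ₁def]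
      show τ₁ _ = τ₁ _
      rw [show 2 * Int.fract t / 2 = Int.fract t by ring]
    · rw [hcdef]
      exact hval_high _ (by linarith)
  have hch₂ : (fun z => τ₂ (ψ z)) = chordFn c γ₂ := by
    funext t
    show τ₂ (ψ t) = chordFn c γ₂ t
    rw [hψeval τ₂ h₂.2 t]
    unfold chordFn
    split_ifs with h
    · rw [hcdef]
      exact hval_low _ (by linarith)
    · rw [hγ₂def]
      show τ₂ _ = τ₂ _
      rw [show 1 - (2 - 2 * Int.fract t) / 2 = Int.fract t by ring]
  -- path properties
  have hpath_c : IsSmoothPath I c := by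
    refine ⟨contMDiff_const, 1, one_pos, fun _ _ => rfl, fun _ _ => rfl⟩
  have hγ₁sm : ContMDiff 𝓘(ℝ, ℝ) I (⊤ : ℕ∞) γ₁ := by
    rw [hγ₁def]
    exact h₁.1.comp (ContDiff.contMDiff
      (contDiff_const.add ((bumpG_contDiff α β).comp
        (contDiff_id.div_const 2))))
  have hγ₂sm : ContMDiff 𝓘(ℝ, ℝ) I (⊤ : ℕ∞) γ₂ := by
    rw [hγ₂def]
    exact h₂.1.comp (ContDiff.contMDiff
      (contDiff_const.add ((bumpG_contDiff α β).comp
        (contDiff_const.sub (contDiff_id.div_const 2)))))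
  have hγ₁0 : γ₁ 0 = 1 := by
    rw [hγ₁def]
    show τ₁ _ = 1
    rw [show (0 : ℝ) / 2 = 0 by norm_num, bumpG_zero (by norm_num), add_zero]
    exact hA1'
  have hγ₁1 : γ₁ 1 = 1 := by
    rw [hγ₁def]
    exact hval_high _ (by norm_num)
  have hγ₂0 : γ₂ 0 = 1 := by
    rw [hγ₂def]
    show τ₂ _ = 1
    rw [show 1 - (0 : ℝ) / 2 = 1 by norm_num, bumpG_one hαβ (by norm_num)]
    rw [show m₂ - 1 + 1 = m₂ by ring]
    exact hA2'
  have hγ₂1 : γ₂ 1 = 1 := by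
    rw [hγ₂def]
    exact hval_low _ (by norm_num)
  have hpath₁ : IsSmoothPath I γ₁ := by
    refine ⟨hγ₁sm, 1/4, by norm_num, fun s hs => ?_, fun s hs => ?_⟩
    · rw [hγ₁def]
      show τ₁ _ = τ₁ _
      rw [bumpG_zero (by linarith : s / 2 ≤ 1/8),
        show (0 : ℝ) / 2 = 0 by norm_num, bumpG_zero (by norm_num)]
    · rw [hγ₁def]
      show τ₁ _ = τ₁ _
      rw [hval_high (s / 2) (by linarith), hval_high (1 / 2) (by norm_num)]
  have hpath₂ : IsSmoothPath I γ₂ := by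
    refine ⟨hγ₂sm, 1/4, by norm_num, fun s hs => ?_, fun s hs => ?_⟩
    · rw [hγ₂def]
      show τ₂ _ = τ₂ _
      rw [bumpG_one hαβ (by linarith : 3/4 ≤ 1 - s / 2),
        show 1 - (0 : ℝ) / 2 = 1 by norm_num, bumpG_one hαβ (by norm_num)]
    · rw [hγ₂def]
      show τ₂ _ = τ₂ _
      rw [hval_low (1 - s / 2) (by linarith), hval_low (1 - 1 / 2) (by norm_num)]
  have hc0 : c 0 = 1 := rfl
  have hc1 : c 1 = 1 := rfl
  have hse₁ : SameEnds γ₁ c := ⟨by rw [hγ₁0, hc0], by rw [hγ₁1, hc1]⟩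
  have hse₂ : SameEnds c γ₂ := ⟨by rw [hγ₂0, hc0], by rw [hγ₂1, hc1]⟩
  have hse_cc : SameEnds c c := ⟨rfl, rfl⟩
  have htrip1 : IsTriple I γ₁ c c := ⟨hpath₁, hpath_c, hpath_c, hse₁, hse_cc⟩
  have htrip2 : IsTriple I c c γ₂ := ⟨hpath_c, hpath_c, hpath₂, hse_cc, hse₂⟩
  -- thin homotopies
  have hth₁ : ThinHomotopic I τ₁ (fun z => τ₁ (ψ z)) :=
    thin_reparam I τ₁ h₁.1 h₁.2 ψ hψcd hψper
  have hth₂ : ThinHomotopic I τ₂ (fun z => τ₂ (ψ z)) :=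
    thin_reparam I τ₂ h₂.1 h₂.2 ψ hψcd hψper
  have hpairper : Function.Periodic (fun z => (τ₁ z, τ₂ z)) 1 := by
    intro x; simp [Prod.ext_iff, h₁.2 x, h₂.2 x]
  have hpairper' : Function.Periodic (fun z => (τ₂ z, τ₁ z)) 1 := by
    intro x; simp [Prod.ext_iff, h₁.2 x, h₂.2 x]
  have hthpair : ThinHomotopic (I.prod I) (fun z => (τ₁ z, τ₂ z))
      (fun z => (τ₁ (ψ z), τ₂ (ψ z))) :=
    thin_reparam (I.prod I) (fun z => (τ₁ z, τ₂ z)) (h₁.1.prodMk h₂.1) hpairper ψ hψcd hψper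
  have hthpair' : ThinHomotopic (I.prod I) (fun z => (τ₂ z, τ₁ z))
      (fun z => (τ₂ (ψ z), τ₁ (ψ z))) :=
    thin_reparam (I.prod I) (fun z => (τ₂ z, τ₁ z)) (h₂.1.prodMk h₁.1) hpairper' ψ hψcd hψper
  have hthprod : ThinHomotopic I (τ₁ * τ₂) ((fun z => τ₁ (ψ z)) * (fun z => τ₂ (ψ z))) :=
    thin_reparam I (τ₁ * τ₂) (h₁.1.mul h₂.1) (h₁.2.mul h₂.2) ψ hψcd hψper
  -- transported elements
  set p₁' : L := ds.d τ₁ (fun z => τ₁ (ψ z)) p₁ with hp₁'def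
  set p₂' : L := ds.d τ₂ (fun z => τ₂ (ψ z)) p₂ with hp₂'def
  have hover₁' : ce.Over p₁' (fun z => τ₁ (ψ z)) := ds.isOver _ _ _ hth₁ hp₁
  have hover₂' : ce.Over p₂' (fun z => τ₂ (ψ z)) := ds.isOver _ _ _ hth₂ hp₂
  have hOp₁c : ce.Over p₁' (chordFn γ₁ c) := hch₁ ▸ hover₁'
  have hOp₂c : ce.Over p₂' (chordFn c γ₂) := hch₂ ▸ hover₂'
  have hOe : ce.Over 1 (chordFn c c) := by
    show (ce.proj 1).1 = chordFn c c
    rw [map_one]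
    funext t
    show (1 : G) = chordFn c c t
    unfold chordFn
    split_ifs <;> rfl
  -- fusion argument
  have hOA : ce.Over (lam.fus γ₁ c c p₁' 1) (chordFn γ₁ c) :=
    lam.isOver γ₁ c c p₁' 1 htrip1 hOp₁c hOe
  have hOB : ce.Over (lam.fus c c γ₂ 1 p₂') (chordFn c γ₂) :=
    lam.isOver c c γ₂ 1 p₂' htrip2 hOe hOp₂c
  have e₁ : γ₁ * c = γ₁ := funext fun s => mul_one _
  have e₂ : c * c = c := funext fun s => mul_one _
  have e₃ : c * γ₂ = γ₂ := funext fun s => one_mul _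
  have e₄ : c * γ₁ = γ₁ := funext fun s => one_mul _
  have e₅ : γ₂ * c = γ₂ := funext fun s => mul_one _
  have hAB : lam.fus γ₁ c c p₁' 1 * lam.fus c c γ₂ 1 p₂' = lam.fus γ₁ c γ₂ p₁' p₂' := by
    have h := hlmul γ₁ c c c c γ₂ p₁' 1 1 p₂' htrip1 htrip2 hOp₁c hOe hOe hOp₂c
    rw [e₁, e₂, e₃, mul_one, one_mul] at h
    exact h
  have hBA : lam.fus c c γ₂ 1 p₂' * lam.fus γ₁ c c p₁' 1 = lam.fus γ₁ c γ₂ p₁' p₂' := by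
    have h := hlmul c c γ₂ γ₁ c c 1 p₂' p₁' 1 htrip2 htrip1 hOe hOp₂c hOp₁c hOe
    rw [e₄, e₂, e₅, one_mul, mul_one] at h
    exact h
  have hABBA : lam.fus γ₁ c c p₁' 1 * lam.fus c c γ₂ 1 p₂' =
      lam.fus c c γ₂ 1 p₂' * lam.fus γ₁ c c p₁' 1 := hAB.trans hBA.symm
  -- fibres are U(1)-torsors
  have torsor : ∀ (q q' : L) (f : ℝ → G), ce.Over q f → ce.Over q' f →
      ∃ z : Circle, q = ce.emb z * q' := by
    intro q q' f hq hq'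
    have hproj : ce.proj q = ce.proj q' := Subtype.ext (hq.trans hq'.symm)
    have hker : ce.proj (q * q'⁻¹) = 1 := by
      rw [map_mul, map_inv, hproj, mul_inv_cancel]
    obtain ⟨z, hz⟩ := (ce.mem_ker_iff _).mp hker
    exact ⟨z, by rw [hz, inv_mul_cancel_right]⟩
  obtain ⟨uz, huz⟩ := torsor (lam.fus γ₁ c c p₁' 1) p₁' (chordFn γ₁ c) hOA hOp₁c
  obtain ⟨vz, hvz⟩ := torsor (lam.fus c c γ₂ 1 p₂') p₂' (chordFn c γ₂) hOB hOp₂c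
  have hcomm' : p₁' * p₂' = p₂' * p₁' := by
    have h1 : lam.fus γ₁ c c p₁' 1 * lam.fus c c γ₂ 1 p₂' =
        (ce.emb uz * ce.emb vz) * (p₁' * p₂') := by
      rw [huz, hvz, mul_assoc, ← mul_assoc p₁' (ce.emb vz) p₂', ← ce.central vz p₁',
        mul_assoc (ce.emb vz) p₁' p₂', ← mul_assoc (ce.emb uz) (ce.emb vz) (p₁' * p₂')]
    have h2 : lam.fus c c γ₂ 1 p₂' * lam.fus γ₁ c c p₁' 1 =
        (ce.emb uz * ce.emb vz) * (p₂' * p₁') := by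
      rw [huz, hvz, mul_assoc, ← mul_assoc p₂' (ce.emb uz) p₁', ← ce.central uz p₂',
        mul_assoc (ce.emb uz) p₂' p₁', ← mul_assoc (ce.emb vz) (ce.emb uz) (p₂' * p₁'),
        show ce.emb vz * ce.emb uz = ce.emb uz * ce.emb vz from (ce.central uz (ce.emb vz)).symm]
    exact mul_left_cancel (h1.symm.trans (hABBA.trans h2))
  -- the commutator scalar
  have hOp₁₂ : ce.Over (p₁ * p₂) (τ₁ * τ₂) := by
    show (ce.proj (p₁ * p₂)).1 = τ₁ * τ₂
    rw [map_mul]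
    show (ce.proj p₁).1 * (ce.proj p₂).1 = τ₁ * τ₂
    rw [hp₁, hp₂]
  have hOp₂₁ : ce.Over (p₂ * p₁) (τ₁ * τ₂) := by
    show (ce.proj (p₂ * p₁)).1 = τ₁ * τ₂
    rw [map_mul]
    show (ce.proj p₂).1 * (ce.proj p₁).1 = τ₁ * τ₂
    rw [hp₂, hp₁, ← hτcomm]
  obtain ⟨z₀, hz₀⟩ := torsor (p₁ * p₂) (p₂ * p₁) (τ₁ * τ₂) hOp₁₂ hOp₂₁
  have hprodcomm : (fun z => τ₁ (ψ z)) * (fun z => τ₂ (ψ z)) =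
      (fun z => τ₂ (ψ z)) * (fun z => τ₁ (ψ z)) := by
    funext z
    rcases hdisj (ψ z) with h | h <;> simp [Pi.mul_apply, h]
  have hdA : ds.d (τ₁ * τ₂) ((fun z => τ₁ (ψ z)) * (fun z => τ₂ (ψ z))) (p₁ * p₂) =
      p₁' * p₂' := hdmul τ₁ τ₂ _ _ p₁ p₂ hthpair hp₁ hp₂
  have hdB : ds.d (τ₂ * τ₁) ((fun z => τ₂ (ψ z)) * (fun z => τ₁ (ψ z))) (p₂ * p₁) =
      p₂' * p₁' := hdmul τ₂ τ₁ _ _ p₂ p₁ hthpair' hp₂ hp₁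
  rw [← hτcomm, ← hprodcomm] at hdB
  have hchain : p₁' * p₂' = ce.emb z₀ * (p₁' * p₂') := by
    calc p₁' * p₂' = ds.d (τ₁ * τ₂) ((fun z => τ₁ (ψ z)) * (fun z => τ₂ (ψ z))) (p₁ * p₂) :=
          hdA.symm
      _ = ds.d (τ₁ * τ₂) ((fun z => τ₁ (ψ z)) * (fun z => τ₂ (ψ z)))
            (ce.emb z₀ * (p₂ * p₁)) := by rw [← hz₀]
      _ = ce.emb z₀ * ds.d (τ₁ * τ₂) ((fun z => τ₁ (ψ z)) * (fun z => τ₂ (ψ z))) (p₂ * p₁) :=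
          ds.equivariant _ _ z₀ (p₂ * p₁) hthprod hOp₂₁
      _ = ce.emb z₀ * (p₂' * p₁') := by rw [hdB]
      _ = ce.emb z₀ * (p₁' * p₂') := by rw [hcomm']
  have hz₀1 : ce.emb z₀ = 1 := right_eq_mul.mp hchain
  rw [hz₀, hz₀1, one_mul]
end
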